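/- arXiv:2509.05840 — 3 statements merged into one kernel-verified Lean document; each statement's English description precedes it below -/
import Mathlib

section
/- Let R be a commutative ring with unity, G = (V, E) a finite edge-labeled graph over R with labeling α, and S a commutative R-algebra that is flat as an R-module. Let G_S be the edge-labeled graph over S with the same vertices and edges as G and with each edge e labeled by the extended ideal α(e)·S (the image ideal under the algebra map R → S). Then the natural S-algebra homomorphism S ⊗_R R_G → ∏_{v ∈ V} S, induced by the inclusion R_G ⊆ ∏_{v ∈ V} R and the map R → S applied componentwise, is injective with image exactly the ring of splines S_{G_S}; in particular S ⊗_R R_G ≅ S_{G_S} as S-algebras. -/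
open scoped TensorProduct

set_option synthInstance.maxHeartbeats 400000
set_option maxHeartbeats 800000

variable {R : Type*} [CommRing R] {V : Type*}

/-- A spline on an edge-labeled graph: a vertex labeling by ring elements
such that adjacent labels agree modulo the edge ideal. -/
def IsSpline (E : V → V → Prop) (α : V → V → Ideal R) (s : V → R) : Prop :=
  ∀ u v, E u v → s u - s v ∈ α u v

/-- The ring of splines, as an `R`-subalgebra of the product ring `V → R`
(the `R`-algebra structure on the spline ring is the diagonal embedding by
constant splines). -/
def splineSubalgebra (E : V → V → Prop) (α : V → V → Ideal R) :
    Subalgebra R (V → R) where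
  carrier := {s | IsSpline E α s}
  algebraMap_mem' := by intro r u v _; simp
  add_mem' := by
    intro a b ha hb u v h
    have key : (a + b) u - (a + b) v = (a u - a v) + (b u - b v) := by
      simp only [Pi.add_apply]; ring
    rw [key]; exact add_mem (ha u v h) (hb u v h)
  mul_mem' := by
    intro a b ha hb u v h
    have key : (a * b) u - (a * b) v = a u * (b u - b v) + (a u - a v) * b v := by
      simp only [Pi.mul_apply]; ring
    rw [key]
    exact add_mem (Ideal.mul_mem_left _ _ (hb u v h)) (Ideal.mul_mem_right _ _ (ha u v h))

variable (S : Type*) [CommRing S] [Algebra R S]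

/-- Componentwise application of `algebraMap R S`, as an `R`-algebra map
`(V → R) → (V → S)`. -/
def piAlgebraMap : (V → R) →ₐ[R] (V → S) where
  toFun := fun s v => algebraMap R S (s v)
  map_one' := by funext v; simp
  map_mul' := by intro a b; funext v; simp
  map_zero' := by funext v; simp
  map_add' := by intro a b; funext v; simp
  commutes' := by intro r; funext v; simp

/-- The natural base-change map `S ⊗_R R_G → ∏_{v ∈ V} S`, induced by the
inclusion `R_G ⊆ ∏_{v ∈ V} R` and by `R → S` componentwise. -/
noncomputable def splineBaseChange (E : V → V → Prop) (α : V → V → Ideal R) :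
    S ⊗[R] (splineSubalgebra E α) →ₐ[S] (V → S) :=
  Algebra.TensorProduct.lift (Algebra.ofId S (V → S))
    ((piAlgebraMap S).comp (splineSubalgebra E α).val)
    (fun _ _ => Commute.all _ _)

section Aux

open Classical in
/-- Auxiliary family of ideals: the edge label on edges, the whole ring otherwise. -/
noncomputable def auxJ {R : Type*} [CommRing R] {V : Type*}
    (E : V → V → Prop) (α : V → V → Ideal R) (p : V × V) : Ideal R :=
  if E p.1 p.2 then α p.1 p.2 else ⊤

/-- The linear map whose kernel is the spline algebra. -/
noncomputable def auxPhi {R : Type*} [CommRing R] {V : Type*}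
    (E : V → V → Prop) (α : V → V → Ideal R) :
    (V → R) →ₗ[R] ∀ p : V × V, R ⧸ auxJ E α p :=
  LinearMap.pi fun p => (auxJ E α p).mkQ ∘ₗ ((LinearMap.proj p.1 : (V → R) →ₗ[R] R) - (LinearMap.proj p.2 : (V → R) →ₗ[R] R))

lemma auxPhi_apply {R : Type*} [CommRing R] {V : Type*}
    (E : V → V → Prop) (α : V → V → Ideal R) (s : V → R) (p : V × V) :
    auxPhi E α s p = Submodule.Quotient.mk (s p.1 - s p.2) := rfl

lemma auxPhi_eq_zero_iff {R : Type*} [CommRing R] {V : Type*}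
    (E : V → V → Prop) (α : V → V → Ideal R) (s : V → R) :
    auxPhi E α s = 0 ↔ IsSpline E α s := by
  constructor
  · intro h u v he
    have := congrFun h (u, v)
    rw [auxPhi_apply, Pi.zero_apply, Submodule.Quotient.mk_eq_zero] at this
    simpa only [auxJ, if_pos he] using this
  · intro h
    funext p
    rw [auxPhi_apply, Pi.zero_apply, Submodule.Quotient.mk_eq_zero, auxJ]
    by_cases he : E p.1 p.2
    · rw [if_pos he]; exact h p.1 p.2 he
    · rw [if_neg he]; trivial

end Aux


open Classical in
/-- The analogous linear map over `S`, with extended ideals. -/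
noncomputable def auxPhiS {R : Type*} [CommRing R] {V : Type*}
    (E : V → V → Prop) (α : V → V → Ideal R)
    (S : Type*) [CommRing S] [Algebra R S] :
    (V → S) →ₗ[R] ∀ p : V × V,
      S ⧸ Submodule.restrictScalars R ((auxJ E α p).map (algebraMap R S)) :=
  LinearMap.pi fun p =>
    (Submodule.restrictScalars R ((auxJ E α p).map (algebraMap R S))).mkQ ∘ₗ
    ((LinearMap.proj p.1 : (V → S) →ₗ[R] S) - (LinearMap.proj p.2 : (V → S) →ₗ[R] S))

lemma auxPhiS_apply {R : Type*} [CommRing R] {V : Type*}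
    (E : V → V → Prop) (α : V → V → Ideal R)
    (S : Type*) [CommRing S] [Algebra R S] (f : V → S) (p : V × V) :
    auxPhiS E α S f p = Submodule.Quotient.mk (f p.1 - f p.2) := rfl

lemma auxPhiS_eq_zero_iff {R : Type*} [CommRing R] {V : Type*}
    (E : V → V → Prop) (α : V → V → Ideal R)
    (S : Type*) [CommRing S] [Algebra R S] (f : V → S) :
    auxPhiS E α S f = 0 ↔
      IsSpline E (fun u v => (α u v).map (algebraMap R S)) f := by
  constructor
  · intro h u v he
    have := congrFun h (u, v)
    rw [auxPhiS_apply, Pi.zero_apply, Submodule.Quotient.mk_eq_zero,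
      Submodule.restrictScalars_mem] at this
    simpa only [auxJ, if_pos he] using this
  · intro h
    funext p
    rw [auxPhiS_apply, Pi.zero_apply, Submodule.Quotient.mk_eq_zero,
      Submodule.restrictScalars_mem, auxJ]
    by_cases he : E p.1 p.2
    · rw [if_pos he]; exact h p.1 p.2 he
    · rw [if_neg he, Ideal.map_top]; trivial

/-- Base change of the quotient component. -/
noncomputable def auxQe {R : Type*} [CommRing R] {V : Type*}
    (E : V → V → Prop) (α : V → V → Ideal R)
    (S : Type*) [CommRing S] [Algebra R S] (p : V × V) :
    S ⊗[R] (R ⧸ auxJ E α p) ≃ₗ[R]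
      S ⧸ Submodule.restrictScalars R ((auxJ E α p).map (algebraMap R S)) :=
  (TensorProduct.tensorQuotEquivQuotSMul S (auxJ E α p)) ≪≫ₗ
    Submodule.quotEquivOfEq _ _ (Ideal.smul_top_eq_map _)

open Classical in
/-- Base change of the whole target. -/
noncomputable def auxPsi {R : Type*} [CommRing R] {V : Type*} [Fintype V] [DecidableEq V]
    (E : V → V → Prop) (α : V → V → Ideal R)
    (S : Type*) [CommRing S] [Algebra R S] :
    S ⊗[R] (∀ p : V × V, R ⧸ auxJ E α p) ≃ₗ[R]
      ∀ p : V × V, S ⧸ Submodule.restrictScalars R ((auxJ E α p).map (algebraMap R S)) :=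
  (TensorProduct.piRight R R S fun p => R ⧸ auxJ E α p) ≪≫ₗ
    LinearEquiv.piCongrRight fun p => auxQe E α S p

/-- Commutativity of the base-change square. -/
lemma auxComm {R : Type*} [CommRing R] {V : Type*} [Fintype V] [DecidableEq V]
    (E : V → V → Prop) (α : V → V → Ideal R)
    (S : Type*) [CommRing S] [Algebra R S] :
    (auxPsi E α S).toLinearMap ∘ₗ (auxPhi E α).lTensor S =
      (auxPhiS E α S) ∘ₗ
        ((TensorProduct.piScalarRight R S S V).toLinearMap.restrictScalars R) := by
  apply TensorProduct.ext'
  intro s f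
  show auxPsi E α S (s ⊗ₜ auxPhi E α f) =
    auxPhiS E α S (TensorProduct.piScalarRight R S S V (s ⊗ₜ f))
  funext p
  have h1 : auxPsi E α S (s ⊗ₜ auxPhi E α f) p
      = auxQe E α S p (s ⊗ₜ (auxPhi E α f p)) := by
    simp [auxPsi]
  rw [h1, auxPhi_apply]
  have h2 : auxQe E α S p (s ⊗ₜ Submodule.Quotient.mk (f p.1 - f p.2))
      = Submodule.Quotient.mk ((f p.1 - f p.2) • s) := by
    rw [auxQe]
    simp only [LinearEquiv.trans_apply]
    rw [Ideal.Quotient.mk_eq_mk, TensorProduct.tensorQuotEquivQuotSMul_tmul_mk,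
      Submodule.quotEquivOfEq_mk]
  rw [h2]
  have h3 : TensorProduct.piScalarRight R S S V (s ⊗ₜ f) = fun j => f j • s := by
    simp
  rw [h3, auxPhiS_apply, sub_smul]

/-- (Flat base change.) If `S` is a flat commutative
`R`-algebra, the natural map `S ⊗_R R_G → ∏_{v ∈ V} S` is injective with
image exactly the ring of splines of the base-changed graph `G_S`, whose
edges carry the extended ideals `α(e)·S`; in particular
`S ⊗_R R_G ≅ S_{G_S}` as `S`-algebras. -/
theorem spline_flat_base_change {R V : Type*} [CommRing R] [Fintype V]
    (E : V → V → Prop) (hsymm : Symmetric E) (hirr : Irreflexive E)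
    (α : V → V → Ideal R) (hα : ∀ u v, α u v = α v u)
    (S : Type*) [CommRing S] [Algebra R S] [Module.Flat R S] :
    Function.Injective (splineBaseChange S E α) ∧
    (splineBaseChange S E α).range =
      splineSubalgebra (R := S) E
        (fun u v => (α u v).map (algebraMap R S)) := by
  classical
  set A := splineSubalgebra E α with hA
  let ι : A →ₗ[R] (V → R) := (Subalgebra.val A).toLinearMap
  have hι : Function.Injective ι := Subtype.val_injective
  have hexR : Function.Exact ι (auxPhi E α) := by
    rw [LinearMap.exact_iff]
    ext s
    rw [LinearMap.mem_ker, auxPhi_eq_zero_iff]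
    constructor
    · intro hs
      exact ⟨⟨s, hs⟩, rfl⟩
    · rintro ⟨⟨t, ht⟩, rfl⟩
      exact ht
  have hexS : Function.Exact (ι.lTensor S) ((auxPhi E α).lTensor S) :=
    Module.Flat.lTensor_exact S hexR
  have hinjT : Function.Injective (ι.lTensor S) :=
    Module.Flat.lTensor_preserves_injective_linearMap ι hι
  set e1 := TensorProduct.piScalarRight R S S V with he1
  have hcomp : (splineBaseChange S E α).toLinearMap.restrictScalars R =
      (e1.toLinearMap.restrictScalars R) ∘ₗ ι.lTensor S := by
    apply TensorProduct.ext'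
    intro s k
    show splineBaseChange S E α (s ⊗ₜ k) = e1 (s ⊗ₜ (k : V → R))
    rw [splineBaseChange, Algebra.TensorProduct.lift_tmul]
    funext v
    simp only [he1, TensorProduct.piScalarRight_apply,
      TensorProduct.piScalarRightHom_tmul]
    show Algebra.ofId S (V → S) s v * algebraMap R S (k.1 v) = k.1 v • s
    rw [Algebra.smul_def, Algebra.ofId_apply]
    exact mul_comm _ _
  have hfun : ∀ x, splineBaseChange S E α x = e1 (ι.lTensor S x) := by
    intro x
    exact LinearMap.congr_fun hcomp x
  have hcomm : ∀ z : S ⊗[R] (V → R),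
      auxPsi E α S ((auxPhi E α).lTensor S z) = auxPhiS E α S (e1 z) := by
    intro z
    exact LinearMap.congr_fun (auxComm E α S) z
  constructor
  · intro a b hab
    apply hinjT
    apply e1.injective
    rw [← hfun, ← hfun, hab]
  · ext x
    rw [AlgHom.mem_range]
    have hmem : x ∈ splineSubalgebra (R := S) E
        (fun u v => (α u v).map (algebraMap R S)) ↔
        IsSpline E (fun u v => (α u v).map (algebraMap R S)) x := Iff.rfl
    rw [hmem, ← auxPhiS_eq_zero_iff E α S x]
    constructor
    · rintro ⟨y, rfl⟩
      rw [hfun y, ← hcomm]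
      rw [hexS.apply_apply_eq_zero y]
      exact map_zero _
    · intro hx
      have h0 : (auxPhi E α).lTensor S (e1.symm x) = 0 := by
        apply (auxPsi E α S).injective
        rw [hcomm (e1.symm x), LinearEquiv.apply_symm_apply, hx, map_zero]
      obtain ⟨y, hy⟩ := (hexS (e1.symm x)).mp h0
      refine ⟨y, ?_⟩
      rw [hfun y, hy, LinearEquiv.apply_symm_apply]
end

section
/- Let R be a commutative ring with unity, G = (V, E) a finite edge-labeled graph over R with labeling α, and f ∈ R an element with f ∈ α(e) for every edge e ∈ E. Then after inverting f the graph becomes trivial: the natural map R_f ⊗_R R_G → ∏_{v ∈ V} R_f (induced by the inclusion R_G ⊆ ∏_{v ∈ V} R and localization at f applied componentwise) is an isomorphism of R_f-algebras onto the full product ring ∏_{v ∈ V} R_f. -/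
open scoped TensorProduct

set_option synthInstance.maxHeartbeats 400000
set_option maxHeartbeats 800000

variable {R : Type*} [CommRing R] {V : Type*}

variable (S : Type*) [CommRing S] [Algebra R S]

/-! Localization is flat, so base change keeps the splines inside `S ⊗[R] (V → R) ≃ V → S`,
which makes the map injective. Since `f` lies in every edge ideal, `f • δ_v` is a spline for
each vertex `v`; once `f` is a unit these produce every `δ_v`, hence surjectivity. -/

section Splines

variable (E : V → V → Prop) (α : V → V → Ideal R)

theorem single_mem_splineSubalgebra [DecidableEq V] {a : R}
    (ha : ∀ u w, E u w → a ∈ α u w) (v : V) :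
    (Pi.single v a : V → R) ∈ splineSubalgebra E α := by
  intro u w huw
  by_cases hu : u = v <;> by_cases hw : w = v
  · subst hu hw; simp
  · subst hu; simpa [hw] using ha _ _ huw
  · subst hw; simpa [hu] using neg_mem (ha _ _ huw)
  · simp [hu, hw]

theorem splineBaseChange_tmul (s : S) (t : splineSubalgebra E α) :
    splineBaseChange S E α (s ⊗ₜ[R] t) = fun v => s * algebraMap R S ((t : V → R) v) := by
  ext v
  simp [splineBaseChange, piAlgebraMap, Algebra.ofId_apply]

theorem splineBaseChange_eq_piScalarRight_comp_lTensor [Fintype V] [DecidableEq V] :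
    ⇑(splineBaseChange S E α) = Algebra.TensorProduct.piScalarRight R S S V ∘
      LinearMap.lTensor S (splineSubalgebra E α).val.toLinearMap := by
  ext x : 1
  induction x using TensorProduct.induction_on with
  | zero => simp
  | tmul s t =>
    ext v
    simp [splineBaseChange_tmul, Algebra.smul_def, mul_comm]
  | add x y hx hy => simp only [map_add, hx, hy, Function.comp_apply]

theorem splineBaseChange_injective [Fintype V] [Module.Flat R S] :
    Function.Injective (splineBaseChange S E α) := by
  classical
  rw [splineBaseChange_eq_piScalarRight_comp_lTensor]
  exact (Algebra.TensorProduct.piScalarRight R S S V).injective.comp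
    (Module.Flat.lTensor_preserves_injective_linearMap _ Subtype.val_injective)

theorem splineBaseChange_surjective [Fintype V] {f : R} (hfS : IsUnit (algebraMap R S f))
    (hf : ∀ u v, E u v → f ∈ α u v) :
    Function.Surjective (splineBaseChange S E α) := by
  classical
  have hsingle : ∀ v (x : S), Pi.single v x ∈ (splineBaseChange S E α).range := by
    intro v x
    rw [AlgHom.mem_range]
    refine ⟨(x * ↑hfS.unit⁻¹) ⊗ₜ ⟨_, single_mem_splineSubalgebra E α hf v⟩, ?_⟩
    rw [splineBaseChange_tmul]
    ext u
    by_cases hu : u = v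
    · subst hu; simp [mul_assoc]
    · simp [hu]
  intro g
  rw [← Finset.univ_sum_single g]
  exact Subalgebra.sum_mem _ fun v _ => hsingle v (g v)

end Splines

theorem spline_localization_trivializes_general {R V : Type*} [CommRing R] [Fintype V]
    (E : V → V → Prop)
    (α : V → V → Ideal R)
    (f : R) (hf : ∀ u v, E u v → f ∈ α u v) :
    Function.Bijective (splineBaseChange (Localization.Away f) E α) :=
  ⟨splineBaseChange_injective _ E α,
    splineBaseChange_surjective _ E α (IsLocalization.Away.algebraMap_isUnit f) hf⟩

/-- If `f ∈ α(e)` for every edge `e`, then after inverting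
`f` the graph becomes trivial: the natural map
`R_f ⊗_R R_G → ∏_{v ∈ V} R_f` is an isomorphism of `R_f`-algebras onto the
full product ring. -/
theorem spline_localization_trivializes {R V : Type*} [CommRing R] [Fintype V]
    (E : V → V → Prop) (hsymm : Symmetric E) (hirr : Irreflexive E)
    (α : V → V → Ideal R) (hα : ∀ u v, α u v = α v u)
    (f : R) (hf : ∀ u v, E u v → f ∈ α u v) :
    Function.Bijective (splineBaseChange (Localization.Away f) E α) :=
  spline_localization_trivializes_general E α f hf
end

section
/- Let R be a commutative ring with unity and I an ideal of R, and let P = {(a, b) ∈ R × R : a − b ∈ I} be the fiber product ring with the two projections p₁, p₂ : P → R. Then the square of topological spaces obtained by applying Spec, with Spec(R/I) mapping to two copies of Spec(R) via the quotient map R → R/I and the two copies of Spec(R) mapping to Spec(P) via p₁ and p₂, is a pushout square in the category of topological spaces; that is, the canonical continuous map from the topological pushout Spec(R) ⊔_{Spec(R/I)} Spec(R) to Spec(P) is a homeomorphism. -/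
/-- The ring of splines of the two-vertex graph with one edge labeled `I`:
the fiber product `{(a, b) ∈ R × R : a - b ∈ I}`, as a subring of `R × R`. -/
def pairSubring (R : Type*) [CommRing R] (I : Ideal R) : Subring (R × R) where
  carrier := {p | p.1 - p.2 ∈ I}
  zero_mem' := by simp
  one_mem' := by simp
  add_mem' := by
    intro a b ha hb
    have key : (a + b).1 - (a + b).2 = (a.1 - a.2) + (b.1 - b.2) := by
      simp only [Prod.fst_add, Prod.snd_add]; ring
    show (a + b).1 - (a + b).2 ∈ I
    rw [key]; exact add_mem ha hb
  neg_mem' := by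
    intro a ha
    have key : (-a).1 - (-a).2 = -(a.1 - a.2) := by
      simp only [Prod.fst_neg, Prod.snd_neg]; ring
    show (-a).1 - (-a).2 ∈ I
    rw [key]; exact neg_mem ha
  mul_mem' := by
    intro a b ha hb
    have key : (a * b).1 - (a * b).2 = a.1 * (b.1 - b.2) + (a.1 - a.2) * b.2 := by
      simp only [Prod.fst_mul, Prod.snd_mul]; ring
    show (a * b).1 - (a * b).2 ∈ I
    rw [key]
    exact add_mem (Ideal.mul_mem_left _ _ hb) (Ideal.mul_mem_right _ _ ha)

/-- First projection `R_G → R`. -/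
def pairFst (R : Type*) [CommRing R] (I : Ideal R) : pairSubring R I →+* R :=
  (RingHom.fst R R).comp (pairSubring R I).subtype

/-- Second projection `R_G → R`. -/
def pairSnd (R : Type*) [CommRing R] (I : Ideal R) : pairSubring R I →+* R :=
  (RingHom.snd R R).comp (pairSubring R I).subtype


/-!
`Spec P` is covered by the closed subsets `V(ker p₁)` and `V(ker p₂)`, since
`ker p₁ ⊓ ker p₂ = 0`, and each `p_i` is surjective (split by the diagonal `R → P`), so
each `Spec(p_i)` is a closed embedding onto one of them. The two copies meet exactly where
`Spec(p₁) x = Spec(p₂) y`; pulling back along the diagonal forces `x = y`, and the element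
`(a, 0)` for `a ∈ I` forces `I ⊆ x`, i.e. `x` comes from `Spec(R/I)`. A map out of a space
covered by two closed embeddings glues uniquely from compatible continuous maps on the pieces.
-/

open Set Topology

section Gluing

variable {A B X T : Type*} [TopologicalSpace A] [TopologicalSpace B] [TopologicalSpace X]
  [TopologicalSpace T] {φ₁ : A → X} {φ₂ : B → X}

theorem continuous_of_comp_isClosedEmbedding_of_union_range (h₁ : IsClosedEmbedding φ₁)
    (h₂ : IsClosedEmbedding φ₂) (hcover : range φ₁ ∪ range φ₂ = univ) {h : X → T}
    (hf : Continuous (h ∘ φ₁)) (hg : Continuous (h ∘ φ₂)) : Continuous h := by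
  rw [continuous_iff_isClosed]
  intro C hC
  have hpreimage :
      h ⁻¹' C = φ₁ '' ((h ∘ φ₁) ⁻¹' C) ∪ φ₂ '' ((h ∘ φ₂) ⁻¹' C) := by
    rw [preimage_comp, preimage_comp, image_preimage_eq_inter_range,
      image_preimage_eq_inter_range, ← inter_union_distrib_left, hcover, inter_univ]
  rw [hpreimage]
  exact (h₁.isClosedMap _ (hC.preimage hf)).union (h₂.isClosedMap _ (hC.preimage hg))

theorem ContinuousMap.existsUnique_glue_of_isClosedEmbedding (h₁ : IsClosedEmbedding φ₁)
    (h₂ : IsClosedEmbedding φ₂) (hcover : range φ₁ ∪ range φ₂ = univ) (f : C(A, T))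
    (g : C(B, T)) (hfg : ∀ a b, φ₁ a = φ₂ b → f a = g b) :
    ∃! h : C(X, T), (∀ a, h (φ₁ a) = f a) ∧ (∀ b, h (φ₂ b) = g b) := by
  have hvalue :
      ∀ x, ∃ t, (∀ a, φ₁ a = x → f a = t) ∧ (∀ b, φ₂ b = x → g b = t) := by
    intro x
    rcases eq_univ_iff_forall.1 hcover x with ⟨a₀, rfl⟩ | ⟨b₀, rfl⟩
    · exact ⟨f a₀, fun a ha => congrArg f (h₁.injective ha),
        fun b hb => (hfg a₀ b hb.symm).symm⟩
    · exact ⟨g b₀, fun a ha => hfg a b₀ ha, fun b hb => congrArg g (h₂.injective hb)⟩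
  choose h hh₁ hh₂ using hvalue
  have hf : ∀ a, h (φ₁ a) = f a := fun a => (hh₁ _ a rfl).symm
  have hg : ∀ b, h (φ₂ b) = g b := fun b => (hh₂ _ b rfl).symm
  have hcont : Continuous h :=
    continuous_of_comp_isClosedEmbedding_of_union_range h₁ h₂ hcover
    (by simpa only [Function.comp_def, hf] using f.continuous)
    (by simpa only [Function.comp_def, hg] using g.continuous)
  refine ⟨⟨h, hcont⟩, ⟨hf, hg⟩, ?_⟩
  rintro h' ⟨hf', hg'⟩
  ext x
  rcases eq_univ_iff_forall.1 hcover x with ⟨a, rfl⟩ | ⟨b, rfl⟩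
  · exact (hf' a).trans (hf a).symm
  · exact (hg' b).trans (hg b).symm

end Gluing

theorem PrimeSpectrum.range_comap_union_eq_univ {A B C : Type*} [CommRing A] [CommRing B]
    [CommRing C] {φ : A →+* B} {ψ : A →+* C} (hφ : Function.Surjective φ)
    (hψ : Function.Surjective ψ) (hker : RingHom.ker φ ⊓ RingHom.ker ψ = ⊥) :
    range (comap φ) ∪ range (comap ψ) = univ := by
  rw [range_comap_of_surjective _ _ hφ, range_comap_of_surjective _ _ hψ, ← zeroLocus_inf,
    hker, Submodule.bot_coe, zeroLocus_singleton_zero]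

section Pair

variable {R : Type*} [CommRing R] (I : Ideal R)

def pairDiag : R →+* pairSubring R I :=
  (RingHom.prod (RingHom.id R) (RingHom.id R)).codRestrict (pairSubring R I)
    fun a => show a - a ∈ I by simp

theorem pairFst_comp_pairDiag : (pairFst R I).comp (pairDiag I) = RingHom.id R := rfl

theorem pairSnd_comp_pairDiag : (pairSnd R I).comp (pairDiag I) = RingHom.id R := rfl

theorem pairFst_surjective : Function.Surjective (pairFst R I) :=
  fun a => ⟨pairDiag I a, RingHom.congr_fun (pairFst_comp_pairDiag I) a⟩

theorem pairSnd_surjective : Function.Surjective (pairSnd R I) :=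
  fun a => ⟨pairDiag I a, RingHom.congr_fun (pairSnd_comp_pairDiag I) a⟩

theorem ker_pairFst_inf_ker_pairSnd :
    RingHom.ker (pairFst R I) ⊓ RingHom.ker (pairSnd R I) = ⊥ :=
  eq_bot_iff.2 fun _ ⟨h₁, h₂⟩ => Subtype.ext (Prod.ext h₁ h₂)

variable {I} {x y : PrimeSpectrum R}

theorem eq_of_comap_pairFst_eq_comap_pairSnd
    (h : PrimeSpectrum.comap (pairFst R I) x = PrimeSpectrum.comap (pairSnd R I) y) : x = y := by
  simpa only [← PrimeSpectrum.comap_comp_apply, pairFst_comp_pairDiag, pairSnd_comp_pairDiag,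
    PrimeSpectrum.comap_id, ContinuousMap.id_apply] using
    congrArg (PrimeSpectrum.comap (pairDiag I)) h

theorem mem_range_comap_mk_of_comap_pairFst_eq_comap_pairSnd
    (h : PrimeSpectrum.comap (pairFst R I) x = PrimeSpectrum.comap (pairSnd R I) y) :
    x ∈ range (PrimeSpectrum.comap (Ideal.Quotient.mk I)) := by
  rw [range_comap_of_surjective _ _ Ideal.Quotient.mk_surjective, Ideal.mk_ker]
  intro a ha
  have hmem : (⟨(a, 0), show a - 0 ∈ I by simpa using ha⟩ : pairSubring R I) ∈
      (PrimeSpectrum.comap (pairSnd R I) y).asIdeal := y.asIdeal.zero_mem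
  rwa [← h] at hmem

end Pair

/-- For `P = {(a, b) ∈ R × R : a - b ∈ I}`, applying `Spec`
to the fiber-product square yields a pushout square of topological spaces:
two copies of `Spec(R)` glued along `Spec(R/I)` give `Spec(P)`. Stated via
the universal property: any pair of continuous maps out of the two copies of
`Spec(R)` agreeing on `Spec(R/I)` factors uniquely through `Spec(P)`. -/
theorem spec_pair_is_topological_pushout {R : Type*} [CommRing R] (I : Ideal R)
    (T : Type*) [TopologicalSpace T]
    (f g : C(PrimeSpectrum R, T))
    (hfg : ∀ q : PrimeSpectrum (R ⧸ I),
      f (PrimeSpectrum.comap (Ideal.Quotient.mk I) q)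
        = g (PrimeSpectrum.comap (Ideal.Quotient.mk I) q)) :
    ∃! h : C(PrimeSpectrum (pairSubring R I), T),
      (∀ x : PrimeSpectrum R, h (PrimeSpectrum.comap (pairFst R I) x) = f x) ∧
      (∀ x : PrimeSpectrum R, h (PrimeSpectrum.comap (pairSnd R I) x) = g x) := by
  refine ContinuousMap.existsUnique_glue_of_isClosedEmbedding
    (PrimeSpectrum.isClosedEmbedding_comap_of_surjective _ _ (pairFst_surjective I))
    (PrimeSpectrum.isClosedEmbedding_comap_of_surjective _ _ (pairSnd_surjective I))
    (PrimeSpectrum.range_comap_union_eq_univ (pairFst_surjective I) (pairSnd_surjective I)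
      (ker_pairFst_inf_ker_pairSnd I)) f g ?_
  intro x y hxy
  obtain ⟨q, rfl⟩ := mem_range_comap_mk_of_comap_pairFst_eq_comap_pairSnd hxy
  rw [← eq_of_comap_pairFst_eq_comap_pairSnd hxy]
  exact hfg q
end
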